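/- Under the hypotheses of the generalized RHOSVD bound for a sum of Tucker tensors, if additionally ∑_{s=0}^S ‖B_s‖² ≤ C ‖Û‖² holds for some C > 0, then ‖Û − U⁰_(r)‖ ≤ √C ‖Û‖ ∑_{ℓ=1}^{3} (∑_{k=rₗ+1} σ_{ℓ,k}²)^{1/2}. -/

import Mathlib

/-!
Writing `Pₗ` for the truncated projectors and `×ₗ` for mode products,
`Û - U⁰ = (Û - P₁ ×₁ Û) + P₁ ×₁ (Û - P₂ ×₂ Û) + P₁ ×₁ P₂ ×₂ (Û - P₃ ×₃ Û)`, and the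
projectors are Frobenius contractions, so `‖Û - U⁰‖ ≤ ∑ₗ ‖Û - Pₗ ×ₗ Û‖`.
The mode-`ℓ` unfolding of `Û` factors as `Aₗ Gₗ`, with `Aₗ` the concatenated side matrix and,
because the other side matrices have orthonormal rows, `‖Gₗ‖² = ∑ₛ ‖Bₛ‖²`. Hence
`‖Û - Pₗ ×ₗ Û‖ ≤ ‖(I - Pₗ) Aₗ‖ ‖Gₗ‖`, and `(I - Pₗ) Aₗ = ∑_{k ≥ rₗ} σₗₖ zₖ vₖᵀ` has Frobenius
norm `(∑_{k ≥ rₗ} σₗₖ²)^{1/2}`. The stability assumption bounds `∑ₛ ‖Bₛ‖²` by `C ‖Û‖²`.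
Modes 2 and 3 reduce to mode 1 by permuting the indices of the tensor.
-/

open Finset Real

section Orthonormal

variable {α I : Type*} [Fintype I]

def OrthonormalOn [DecidableEq α] (s : Set α) (f : α → I → ℝ) : Prop :=
  ∀ t ∈ s, ∀ t' ∈ s, ∑ i, f t i * f t' i = if t = t' then 1 else 0

theorem OrthonormalOn.mono [DecidableEq α] {s s' : Set α} {f : α → I → ℝ}
    (hf : OrthonormalOn s' f) (hs : s ⊆ s') : OrthonormalOn s f :=
  fun t ht t' ht' => hf t (hs ht) t' (hs ht')

theorem OrthonormalOn.sum_sq_sum_mul [DecidableEq α] {s : Finset α} {f : α → I → ℝ}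
    (hf : OrthonormalOn (s : Set α) f) (c : α → ℝ) :
    ∑ i, (∑ t ∈ s, c t * f t i) ^ 2 = ∑ t ∈ s, c t ^ 2 := by
  calc ∑ i, (∑ t ∈ s, c t * f t i) ^ 2
      = ∑ t ∈ s, ∑ t' ∈ s, c t * c t' * ∑ i, f t i * f t' i := by
        simp_rw [sq, sum_mul_sum, mul_sum]
        rw [sum_comm]
        refine sum_congr rfl fun t _ => ?_
        rw [sum_comm]
        exact sum_congr rfl fun _ _ => sum_congr rfl fun _ _ => by ring
    _ = ∑ t ∈ s, c t ^ 2 := by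
        refine sum_congr rfl fun t ht => ?_
        rw [sum_congr rfl fun t' ht' => by rw [hf t ht t' ht']]
        simp [sq, ht]

def orthProj (s : Finset α) (f : α → I → ℝ) (i i' : I) : ℝ := ∑ t ∈ s, f t i * f t i'

theorem OrthonormalOn.sum_sq_inner_le [DecidableEq α] {s : Finset α} {f : α → I → ℝ}
    (hf : OrthonormalOn (s : Set α) f) (w : I → ℝ) :
    ∑ t ∈ s, (∑ i, f t i * w i) ^ 2 ≤ ∑ i, w i ^ 2 := by
  set a := fun t => ∑ i, f t i * w i
  have hpair : ∑ t ∈ s, a t ^ 2 = ∑ i, (∑ t ∈ s, a t * f t i) * w i := by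
    simp_rw [sum_mul, sq]
    rw [sum_comm]
    simp only [a, mul_sum, mul_assoc]
  have hcs := sum_mul_sq_le_sq_mul_sq univ (fun i => ∑ t ∈ s, a t * f t i) w
  rw [← hpair, hf.sum_sq_sum_mul] at hcs
  nlinarith [sum_nonneg fun t (_ : t ∈ s) => sq_nonneg (a t),
    sum_nonneg fun i (_ : i ∈ univ) => sq_nonneg (w i)]

theorem OrthonormalOn.sum_sq_orthProj_mul_le [DecidableEq α] {s : Finset α} {f : α → I → ℝ}
    (hf : OrthonormalOn (s : Set α) f) (w : I → ℝ) :
    ∑ i, (∑ i', orthProj s f i i' * w i') ^ 2 ≤ ∑ i, w i ^ 2 := by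
  have hexpand : ∀ i, ∑ i', orthProj s f i i' * w i' = ∑ t ∈ s, (∑ i', f t i' * w i') * f t i := by
    intro i
    simp only [orthProj, sum_mul]
    rw [sum_comm]
    exact sum_congr rfl fun _ _ => sum_congr rfl fun _ _ => by ring
  simp_rw [hexpand, hf.sum_sq_sum_mul]
  exact hf.sum_sq_inner_le w

end Orthonormal

theorem OrthonormalOn.sum_sq_sum_sum_mul {α β I J : Type*} [Fintype α] [Fintype β] [Fintype I]
    [Fintype J] [DecidableEq α] [DecidableEq β] {f : α → I → ℝ} {g : β → J → ℝ}
    (hf : OrthonormalOn Set.univ f) (hg : OrthonormalOn Set.univ g) (c : α → β → ℝ) :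
    ∑ i, ∑ j, (∑ t, ∑ t', c t t' * f t i * g t' j) ^ 2 = ∑ t, ∑ t', c t t' ^ 2 := by
  have hf' : OrthonormalOn ((univ : Finset α) : Set α) f := by rwa [coe_univ]
  have hg' : OrthonormalOn ((univ : Finset β) : Set β) g := by rwa [coe_univ]
  have hcol : ∀ i j, ∑ t, ∑ t', c t t' * f t i * g t' j = ∑ t', (∑ t, c t t' * f t i) * g t' j := by
    intro i j
    rw [sum_comm]
    simp only [sum_mul]
  simp_rw [hcol, hg'.sum_sq_sum_mul]
  rw [sum_comm]
  simp_rw [hf'.sum_sq_sum_mul]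
  exact sum_comm

theorem sum_sq_sum_mul_le {ι ρ κ : Type*} [Fintype ι] [Fintype ρ] [Fintype κ]
    (D : ι → ρ → ℝ) (G : ρ → κ → ℝ) :
    ∑ i, ∑ c, (∑ p, D i p * G p c) ^ 2 ≤ (∑ i, ∑ p, D i p ^ 2) * ∑ p, ∑ c, G p c ^ 2 := by
  calc ∑ i, ∑ c, (∑ p, D i p * G p c) ^ 2
      ≤ ∑ i, ∑ c, (∑ p, D i p ^ 2) * ∑ p, G p c ^ 2 := by
        gcongr with i _ c _
        exact sum_mul_sq_le_sq_mul_sq _ _ _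
    _ = (∑ i, ∑ p, D i p ^ 2) * ∑ p, ∑ c, G p c ^ 2 := by
        rw [sum_comm (s := univ (α := ρ)), sum_mul]
        simp only [mul_sum]

section SingularValueTail

variable {I ρ : Type*} [Fintype I] {R r : ℕ} {σ : ℕ → ℝ} {z : ℕ → I → ℝ}
  {v : ℕ → ρ → ℝ}

theorem orthProj_mul_of_lt (hr : r ≤ R) (hz : OrthonormalOn (Set.Iio R) z) {t : ℕ} (ht : t < R)
    (i : I) : ∑ i', orthProj (range r) z i i' * z t i' = if t < r then z t i else 0 := by
  calc ∑ i', orthProj (range r) z i i' * z t i'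
      = ∑ t' ∈ range r, z t' i * ∑ i', z t' i' * z t i' := by
        simp only [orthProj, sum_mul, mul_sum]
        rw [sum_comm]
        exact sum_congr rfl fun _ _ => sum_congr rfl fun _ _ => by ring
    _ = ∑ t' ∈ range r, if t' = t then z t' i else 0 := by
        refine sum_congr rfl fun t' ht' => ?_
        rw [hz t' ((mem_range.1 ht').trans_le hr) t ht]
        simp
    _ = if t < r then z t i else 0 := by simp

theorem sub_orthProj_mul_svd (hr : r ≤ R) (hz : OrthonormalOn (Set.Iio R) z) (i : I) (p : ρ) :
    ∑ t ∈ range R, σ t * z t i * v t p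
        - ∑ i', orthProj (range r) z i i' * ∑ t ∈ range R, σ t * z t i' * v t p
      = ∑ t ∈ Ico r R, σ t * z t i * v t p := by
  have hproj : ∑ i', orthProj (range r) z i i' * ∑ t ∈ range R, σ t * z t i' * v t p
      = ∑ t ∈ range R, if t < r then σ t * z t i * v t p else 0 := by
    calc ∑ i', orthProj (range r) z i i' * ∑ t ∈ range R, σ t * z t i' * v t p
        = ∑ t ∈ range R, σ t * v t p * ∑ i', orthProj (range r) z i i' * z t i' := by
          simp only [mul_sum]
          rw [sum_comm]
          exact sum_congr rfl fun _ _ => sum_congr rfl fun _ _ => by ring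
      _ = _ := sum_congr rfl fun t ht => by
          rw [orthProj_mul_of_lt hr hz (mem_range.1 ht)]
          split_ifs <;> ring
  rw [hproj, ← sum_sub_distrib, range_eq_Ico, ← sum_Ico_consecutive _ (Nat.zero_le r) hr,
    sum_eq_zero fun t ht => by simp [(mem_Ico.1 ht).2], zero_add]
  exact sum_congr rfl fun t ht => by simp [(mem_Ico.1 ht).1.not_gt]

theorem sum_sq_sum_Ico_svd [Fintype ρ] (hz : OrthonormalOn (Set.Iio R) z)
    (hv : OrthonormalOn (Set.Iio R) v) :
    ∑ i, ∑ p, (∑ t ∈ Ico r R, σ t * z t i * v t p) ^ 2 = ∑ t ∈ Ico r R, σ t ^ 2 := by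
  have hsub : (Ico r R : Set ℕ) ⊆ Set.Iio R := fun t ht => (mem_Ico.1 ht).2
  simp_rw [(hv.mono hsub).sum_sq_sum_mul, mul_pow]
  rw [sum_comm]
  refine sum_congr rfl fun t ht => ?_
  have hunit : ∑ i, z t i ^ 2 = 1 := by simpa [sq] using hz t (hsub ht) t (hsub ht)
  rw [← mul_sum, hunit, mul_one]

theorem sum_sq_sub_orthProj_mul_le [Fintype ρ] {κ : Type*} [Fintype κ] (hr : r ≤ R)
    (hz : OrthonormalOn (Set.Iio R) z) (hv : OrthonormalOn (Set.Iio R) v) {A : I → ρ → ℝ}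
    (hA : ∀ i p, A i p = ∑ t ∈ range R, σ t * z t i * v t p) (G : ρ → κ → ℝ) :
    ∑ i, ∑ x, (∑ p, A i p * G p x - ∑ i', orthProj (range r) z i i' * ∑ p, A i' p * G p x) ^ 2
      ≤ (∑ t ∈ Ico r R, σ t ^ 2) * ∑ p, ∑ x, G p x ^ 2 := by
  have hres : ∀ i x, ∑ p, A i p * G p x - ∑ i', orthProj (range r) z i i' * ∑ p, A i' p * G p x
      = ∑ p, (∑ t ∈ Ico r R, σ t * z t i * v t p) * G p x := by
    intro i x
    simp_rw [← sub_orthProj_mul_svd hr hz i, ← hA, sub_mul, sum_sub_distrib, sum_mul, mul_sum]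
    rw [sum_comm (s := univ (α := I))]
    simp only [mul_assoc]
  simp_rw [hres]
  calc _ ≤ _ := sum_sq_sum_mul_le _ G
    _ = _ := by rw [sum_sq_sum_Ico_svd hz hv]

end SingularValueTail

section Tensor

variable {I J K : Type*}

def modeMul₁ [Fintype I] (M : I → I → ℝ) (T : I → J → K → ℝ) (i : I) (j : J) (k : K) : ℝ :=
  ∑ i', M i i' * T i' j k

def modeMul₂ [Fintype J] (M : J → J → ℝ) (T : I → J → K → ℝ) (i : I) (j : J) (k : K) : ℝ :=
  ∑ j', M j j' * T i j' k

def modeMul₃ [Fintype K] (M : K → K → ℝ) (T : I → J → K → ℝ) (i : I) (j : J) (k : K) : ℝ :=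
  ∑ k', M k k' * T i j k'

theorem modeMul₁_sub [Fintype I] (M : I → I → ℝ) (T T' : I → J → K → ℝ) :
    modeMul₁ M (T - T') = modeMul₁ M T - modeMul₁ M T' := by
  ext i j k
  simp [modeMul₁, mul_sub, sum_sub_distrib]

theorem modeMul₂_sub [Fintype J] (M : J → J → ℝ) (T T' : I → J → K → ℝ) :
    modeMul₂ M (T - T') = modeMul₂ M T - modeMul₂ M T' := by
  ext i j k
  simp [modeMul₂, mul_sub, sum_sub_distrib]

variable [Fintype I] [Fintype J] [Fintype K]

noncomputable def frobNorm (T : I → J → K → ℝ) : ℝ := √(∑ i, ∑ j, ∑ k, T i j k ^ 2)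

theorem frobNorm_eq_norm (T : I → J → K → ℝ) :
    frobNorm T = ‖(WithLp.toLp 2 fun x : I × J × K => T x.1 x.2.1 x.2.2 : EuclideanSpace ℝ _)‖ := by
  simp [EuclideanSpace.norm_eq, frobNorm, Fintype.sum_prod_type]

theorem frobNorm_add_le (T T' : I → J → K → ℝ) : frobNorm (T + T') ≤ frobNorm T + frobNorm T' := by
  simp only [frobNorm_eq_norm]
  exact (congrArg norm (WithLp.toLp_add 2 _ _)).trans_le (norm_add_le _ _)

theorem frobNorm_swap₁₂ (T : I → J → K → ℝ) : frobNorm (fun j i k => T i j k) = frobNorm T := by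
  rw [frobNorm, frobNorm, sum_comm]

theorem frobNorm_swap₁₃ (T : I → J → K → ℝ) : frobNorm (fun k i j => T i j k) = frobNorm T := by
  rw [frobNorm, frobNorm, sum_comm]
  simp_rw [sum_comm (s := univ (α := K))]

theorem frobNorm_modeMul₁_orthProj_le {α : Type*} [DecidableEq α] {s : Finset α}
    {f : α → I → ℝ} (hf : OrthonormalOn (s : Set α) f) (T : I → J → K → ℝ) :
    frobNorm (modeMul₁ (orthProj s f) T) ≤ frobNorm T := by
  refine sqrt_le_sqrt ?_
  rw [sum_comm, sum_comm (s := univ (α := I))]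
  simp_rw [sum_comm (s := univ (α := I)) (t := univ (α := K))]
  exact sum_le_sum fun j _ => sum_le_sum fun k _ => hf.sum_sq_orthProj_mul_le fun i => T i j k

theorem frobNorm_modeMul₂_orthProj_le {α : Type*} [DecidableEq α] {s : Finset α}
    {f : α → J → ℝ} (hf : OrthonormalOn (s : Set α) f) (T : I → J → K → ℝ) :
    frobNorm (modeMul₂ (orthProj s f) T) ≤ frobNorm T := by
  rw [← frobNorm_swap₁₂, ← frobNorm_swap₁₂ T]
  exact frobNorm_modeMul₁_orthProj_le hf _

end Tensor

theorem frobNorm_sub_modeMul_orthProj_le {I J K α β : Type*} [Fintype I] [Fintype J] [Fintype K]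
    [DecidableEq α] [DecidableEq β] {s₁ : Finset α} {s₂ : Finset β} {f₁ : α → I → ℝ}
    {f₂ : β → J → ℝ} (hf₁ : OrthonormalOn (s₁ : Set α) f₁) (hf₂ : OrthonormalOn (s₂ : Set β) f₂)
    (M : K → K → ℝ) (T : I → J → K → ℝ) :
    frobNorm (T - modeMul₁ (orthProj s₁ f₁) (modeMul₂ (orthProj s₂ f₂) (modeMul₃ M T)))
      ≤ frobNorm (T - modeMul₁ (orthProj s₁ f₁) T) + frobNorm (T - modeMul₂ (orthProj s₂ f₂) T)
        + frobNorm (T - modeMul₃ M T) := by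
  set P₁ := orthProj s₁ f₁
  set P₂ := orthProj s₂ f₂
  have hsplit : T - modeMul₁ P₁ (modeMul₂ P₂ (modeMul₃ M T))
      = (T - modeMul₁ P₁ T) + modeMul₁ P₁ (T - modeMul₂ P₂ T)
        + modeMul₁ P₁ (modeMul₂ P₂ (T - modeMul₃ M T)) := by
    simp only [modeMul₁_sub, modeMul₂_sub]
    abel
  rw [hsplit]
  refine ((frobNorm_add_le _ _).trans (add_le_add_left (frobNorm_add_le _ _) _)).trans ?_
  gcongr
  · exact frobNorm_modeMul₁_orthProj_le hf₁ _
  · exact (frobNorm_modeMul₁_orthProj_le hf₁ _).trans (frobNorm_modeMul₂_orthProj_le hf₂ _)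

section TuckerSum

variable {ι : Type*} [Fintype ι] {α β γ : ι → Type*} [∀ s, Fintype (α s)] [∀ s, Fintype (β s)]
  [∀ s, Fintype (γ s)] {I J K : Type*}

def tuckerSum (B : ∀ s, α s → β s → γ s → ℝ) (a : ∀ s, α s → I → ℝ) (b : ∀ s, β s → J → ℝ)
    (c : ∀ s, γ s → K → ℝ) (i : I) (j : J) (k : K) : ℝ :=
  ∑ s, ∑ m₁, ∑ m₂, ∑ m₃, B s m₁ m₂ m₃ * a s m₁ i * b s m₂ j * c s m₃ k

theorem tuckerSum_swap₁₂ (B : ∀ s, α s → β s → γ s → ℝ) (a : ∀ s, α s → I → ℝ)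
    (b : ∀ s, β s → J → ℝ) (c : ∀ s, γ s → K → ℝ) :
    (fun j i k => tuckerSum B a b c i j k) = tuckerSum (fun s m₂ m₁ m₃ => B s m₁ m₂ m₃) b a c := by
  ext j i k
  refine sum_congr rfl fun s _ => ?_
  rw [sum_comm]
  exact sum_congr rfl fun _ _ => sum_congr rfl fun _ _ => sum_congr rfl fun _ _ => by ring

theorem tuckerSum_swap₁₃ (B : ∀ s, α s → β s → γ s → ℝ) (a : ∀ s, α s → I → ℝ)
    (b : ∀ s, β s → J → ℝ) (c : ∀ s, γ s → K → ℝ) :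
    (fun k i j => tuckerSum B a b c i j k) = tuckerSum (fun s m₃ m₁ m₂ => B s m₁ m₂ m₃) c a b := by
  ext k i j
  refine sum_congr rfl fun s _ => ?_
  simp_rw [sum_comm (t := univ (α := γ s))]
  exact sum_congr rfl fun _ _ => sum_congr rfl fun _ _ => sum_congr rfl fun _ _ => by ring

variable [Fintype I] [Fintype J] [Fintype K] {R r : ℕ} {σ : ℕ → ℝ}

theorem frobNorm_sub_modeMul₁_orthProj_tuckerSum_le [∀ s, DecidableEq (β s)]
    [∀ s, DecidableEq (γ s)] (B : ∀ s, α s → β s → γ s → ℝ) {a : ∀ s, α s → I → ℝ}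
    {b : ∀ s, β s → J → ℝ} {c : ∀ s, γ s → K → ℝ} (hb : ∀ s, OrthonormalOn Set.univ (b s))
    (hc : ∀ s, OrthonormalOn Set.univ (c s)) (hr : r ≤ R) {z : ℕ → I → ℝ}
    {v : ℕ → (Σ s, α s) → ℝ} (hz : OrthonormalOn (Set.Iio R) z)
    (hv : OrthonormalOn (Set.Iio R) v)
    (ha : ∀ s m i, a s m i = ∑ t ∈ range R, σ t * z t i * v t ⟨s, m⟩) :
    frobNorm (tuckerSum B a b c - modeMul₁ (orthProj (range r) z) (tuckerSum B a b c))
      ≤ √(∑ t ∈ Ico r R, σ t ^ 2) * √(∑ s, ∑ m₁, ∑ m₂, ∑ m₃, B s m₁ m₂ m₃ ^ 2) := by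
  set G : (Σ s, α s) → J × K → ℝ :=
    fun p x => ∑ m₂, ∑ m₃, B p.1 p.2 m₂ m₃ * b p.1 m₂ x.1 * c p.1 m₃ x.2
  have hunfold : ∀ i j k, tuckerSum B a b c i j k = ∑ p, a p.1 p.2 i * G p (j, k) := by
    intro i j k
    simp only [tuckerSum, G, Fintype.sum_sigma, mul_sum]
    exact sum_congr rfl fun _ _ => sum_congr rfl fun _ _ => sum_congr rfl fun _ _ =>
      sum_congr rfl fun _ _ => by ring
  have hG : ∑ p, ∑ x, G p x ^ 2 = ∑ s, ∑ m₁, ∑ m₂, ∑ m₃, B s m₁ m₂ m₃ ^ 2 := by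
    simp only [G, Fintype.sum_sigma, Fintype.sum_prod_type]
    exact sum_congr rfl fun s _ => sum_congr rfl fun m₁ _ =>
      (hb s).sum_sq_sum_sum_mul (hc s) (B s m₁)
  have hres := sum_sq_sub_orthProj_mul_le hr hz hv (A := fun i p => a p.1 p.2 i)
    (fun i p => ha p.1 p.2 i) G
  rw [hG] at hres
  rw [← sqrt_mul (sum_nonneg fun t _ => sq_nonneg (σ t))]
  refine sqrt_le_sqrt (le_of_eq_of_le (sum_congr rfl fun i _ => ?_) hres)
  rw [Fintype.sum_prod_type]
  simp [modeMul₁, hunfold]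

theorem frobNorm_sub_modeMul₂_orthProj_tuckerSum_le [∀ s, DecidableEq (α s)]
    [∀ s, DecidableEq (γ s)] (B : ∀ s, α s → β s → γ s → ℝ) {a : ∀ s, α s → I → ℝ}
    {b : ∀ s, β s → J → ℝ} {c : ∀ s, γ s → K → ℝ} (ha : ∀ s, OrthonormalOn Set.univ (a s))
    (hc : ∀ s, OrthonormalOn Set.univ (c s)) (hr : r ≤ R) {z : ℕ → J → ℝ}
    {v : ℕ → (Σ s, β s) → ℝ} (hz : OrthonormalOn (Set.Iio R) z)
    (hv : OrthonormalOn (Set.Iio R) v)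
    (hb : ∀ s m j, b s m j = ∑ t ∈ range R, σ t * z t j * v t ⟨s, m⟩) :
    frobNorm (tuckerSum B a b c - modeMul₂ (orthProj (range r) z) (tuckerSum B a b c))
      ≤ √(∑ t ∈ Ico r R, σ t ^ 2) * √(∑ s, ∑ m₁, ∑ m₂, ∑ m₃, B s m₁ m₂ m₃ ^ 2) := by
  have h := frobNorm_sub_modeMul₁_orthProj_tuckerSum_le (fun s m₂ m₁ m₃ => B s m₁ m₂ m₃) ha hc hr
    hz hv hb
  rw [← tuckerSum_swap₁₂] at h
  have hB : ∑ s, ∑ m₂, ∑ m₁, ∑ m₃, B s m₁ m₂ m₃ ^ 2 = ∑ s, ∑ m₁, ∑ m₂, ∑ m₃, B s m₁ m₂ m₃ ^ 2 :=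
    sum_congr rfl fun _ _ => sum_comm
  rw [← frobNorm_swap₁₂, ← hB]
  exact h

theorem frobNorm_sub_modeMul₃_orthProj_tuckerSum_le [∀ s, DecidableEq (α s)]
    [∀ s, DecidableEq (β s)] (B : ∀ s, α s → β s → γ s → ℝ) {a : ∀ s, α s → I → ℝ}
    {b : ∀ s, β s → J → ℝ} {c : ∀ s, γ s → K → ℝ} (ha : ∀ s, OrthonormalOn Set.univ (a s))
    (hb : ∀ s, OrthonormalOn Set.univ (b s)) (hr : r ≤ R) {z : ℕ → K → ℝ}
    {v : ℕ → (Σ s, γ s) → ℝ} (hz : OrthonormalOn (Set.Iio R) z)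
    (hv : OrthonormalOn (Set.Iio R) v)
    (hc : ∀ s m k, c s m k = ∑ t ∈ range R, σ t * z t k * v t ⟨s, m⟩) :
    frobNorm (tuckerSum B a b c - modeMul₃ (orthProj (range r) z) (tuckerSum B a b c))
      ≤ √(∑ t ∈ Ico r R, σ t ^ 2) * √(∑ s, ∑ m₁, ∑ m₂, ∑ m₃, B s m₁ m₂ m₃ ^ 2) := by
  have h := frobNorm_sub_modeMul₁_orthProj_tuckerSum_le (fun s m₃ m₁ m₂ => B s m₁ m₂ m₃) ha hb hr
    hz hv hc
  rw [← tuckerSum_swap₁₃] at h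
  have hB : ∑ s, ∑ m₃, ∑ m₁, ∑ m₂, B s m₁ m₂ m₃ ^ 2 = ∑ s, ∑ m₁, ∑ m₂, ∑ m₃, B s m₁ m₂ m₃ ^ 2 :=
    sum_congr rfl fun s _ => by simp_rw [sum_comm (t := univ (α := γ s))]
  rw [← frobNorm_swap₁₃, ← hB]
  exact h

end TuckerSum

theorem tucker_sum_to_tucker_relative_error_bound_general (n S : ℕ)
    (r : Fin (S + 1) → Fin 3 → ℕ) (rr : Fin 3 → ℕ)
    (u : (s : Fin (S + 1)) → (ℓ : Fin 3) → Fin (r s ℓ) → Fin n → ℝ)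
    (B : (s : Fin (S + 1)) → Fin (r s 0) → Fin (r s 1) → Fin (r s 2) → ℝ)
    (hu : ∀ s ℓ m m', ∑ i, u s ℓ m i * u s ℓ m' i = if m = m' then 1 else 0)
    (U : Fin (S + 1) → Fin n → Fin n → Fin n → ℝ)
    (hU : ∀ s i j k, U s i j k =
      ∑ m1, ∑ m2, ∑ m3, B s m1 m2 m3 * u s 0 m1 i * u s 1 m2 j * u s 2 m3 k)
    (Uhat : Fin n → Fin n → Fin n → ℝ)
    (hUhat : ∀ i j k, Uhat i j k = ∑ s, U s i j k)
    (Rtot : Fin 3 → ℕ)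
    (σ : Fin 3 → ℕ → ℝ) (z : Fin 3 → ℕ → Fin n → ℝ)
    (v : (ℓ : Fin 3) → ℕ → (Σ s : Fin (S + 1), Fin (r s ℓ)) → ℝ)
    (hz : ∀ ℓ, ∀ k < Rtot ℓ, ∀ k' < Rtot ℓ,
      ∑ i, z ℓ k i * z ℓ k' i = if k = k' then 1 else 0)
    (hv : ∀ ℓ, ∀ k < Rtot ℓ, ∀ k' < Rtot ℓ,
      ∑ c : (Σ s : Fin (S + 1), Fin (r s ℓ)), v ℓ k c * v ℓ k' c = if k = k' then 1 else 0)
    (hsvd : ∀ ℓ s m i, u s ℓ m i =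
      ∑ t ∈ Finset.range (Rtot ℓ), σ ℓ t * z ℓ t i * v ℓ t ⟨s, m⟩)
    (hrr : ∀ ℓ, rr ℓ ≤ Rtot ℓ)
    (P : Fin 3 → Fin n → Fin n → ℝ)
    (hP : ∀ ℓ i i', P ℓ i i' = ∑ t ∈ Finset.range (rr ℓ), z ℓ t i * z ℓ t i')
    (U0 : Fin n → Fin n → Fin n → ℝ)
    (hU0 : ∀ i j k, U0 i j k =
      ∑ i', ∑ j', ∑ k', P 0 i i' * P 1 j j' * P 2 k k' * Uhat i' j' k')
    (C : ℝ)
    (hstab : ∑ s, ∑ m1, ∑ m2, ∑ m3, (B s m1 m2 m3) ^ 2 ≤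
      C * ∑ i, ∑ j, ∑ k, (Uhat i j k) ^ 2) :
    Real.sqrt (∑ i, ∑ j, ∑ k, (Uhat i j k - U0 i j k) ^ 2) ≤
      Real.sqrt C * Real.sqrt (∑ i, ∑ j, ∑ k, (Uhat i j k) ^ 2) *
        ∑ ℓ : Fin 3, Real.sqrt (∑ k ∈ Finset.Ico (rr ℓ) (Rtot ℓ), (σ ℓ k) ^ 2) := by
  have hcore : √(∑ s, ∑ m1, ∑ m2, ∑ m3, B s m1 m2 m3 ^ 2)
      ≤ √C * √(∑ i, ∑ j, ∑ k, Uhat i j k ^ 2) := by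
    rw [← sqrt_mul' C (by positivity)]
    exact sqrt_le_sqrt hstab
  obtain rfl : U0 = modeMul₁ (P 0) (modeMul₂ (P 1) (modeMul₃ (P 2) Uhat)) := by
    ext i j k
    simp only [hU0, modeMul₁, modeMul₂, modeMul₃, mul_sum, mul_assoc]
  obtain rfl : P = fun ℓ => orthProj (range (rr ℓ)) (z ℓ) := funext fun ℓ => funext₂ (hP ℓ)
  obtain rfl : Uhat = tuckerSum B (fun s => u s 0) (fun s => u s 1) (fun s => u s 2) := by
    ext i j k
    simp only [hUhat, hU, tuckerSum]
  have hu' : ∀ ℓ s, OrthonormalOn Set.univ (u s ℓ) := fun ℓ s m _ m' _ => hu s ℓ m m'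
  have hzr : ∀ ℓ, OrthonormalOn (range (rr ℓ) : Set ℕ) (z ℓ) := fun ℓ =>
    OrthonormalOn.mono (s' := Set.Iio (Rtot ℓ)) (hz ℓ) fun t ht => (mem_range.1 ht).trans_le (hrr ℓ)
  refine (frobNorm_sub_modeMul_orthProj_le (hzr 0) (hzr 1) _ _).trans ?_
  refine (add_le_add (add_le_add
    (frobNorm_sub_modeMul₁_orthProj_tuckerSum_le B (hu' 1) (hu' 2) (hrr 0) (hz 0) (hv 0) (hsvd 0))
    (frobNorm_sub_modeMul₂_orthProj_tuckerSum_le B (hu' 0) (hu' 2) (hrr 1) (hz 1) (hv 1) (hsvd 1)))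
    (frobNorm_sub_modeMul₃_orthProj_tuckerSum_le B (hu' 0) (hu' 1) (hrr 2) (hz 2) (hv 2)
      (hsvd 2))).trans ?_
  rw [Fin.sum_univ_three, ← add_mul, ← add_mul, mul_comm]
  gcongr

theorem tucker_sum_to_tucker_relative_error_bound (n S : ℕ)
    (r : Fin (S + 1) → Fin 3 → ℕ) (rr : Fin 3 → ℕ)
    (u : (s : Fin (S + 1)) → (ℓ : Fin 3) → Fin (r s ℓ) → Fin n → ℝ)
    (B : (s : Fin (S + 1)) → Fin (r s 0) → Fin (r s 1) → Fin (r s 2) → ℝ)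
    (hu : ∀ s ℓ m m', ∑ i, u s ℓ m i * u s ℓ m' i = if m = m' then 1 else 0)
    (U : Fin (S + 1) → Fin n → Fin n → Fin n → ℝ)
    (hU : ∀ s i j k, U s i j k =
      ∑ m1, ∑ m2, ∑ m3, B s m1 m2 m3 * u s 0 m1 i * u s 1 m2 j * u s 2 m3 k)
    (Uhat : Fin n → Fin n → Fin n → ℝ)
    (hUhat : ∀ i j k, Uhat i j k = ∑ s, U s i j k)
    (Rtot : Fin 3 → ℕ) (hRtot : ∀ ℓ, Rtot ℓ = min n (∑ s, r s ℓ))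
    (σ : Fin 3 → ℕ → ℝ) (z : Fin 3 → ℕ → Fin n → ℝ)
    (v : (ℓ : Fin 3) → ℕ → (Σ s : Fin (S + 1), Fin (r s ℓ)) → ℝ)
    (hσnn : ∀ ℓ k, 0 ≤ σ ℓ k)
    (hσdec : ∀ ℓ k k', k ≤ k' → σ ℓ k' ≤ σ ℓ k)
    (hz : ∀ ℓ, ∀ k < Rtot ℓ, ∀ k' < Rtot ℓ,
      ∑ i, z ℓ k i * z ℓ k' i = if k = k' then 1 else 0)
    (hv : ∀ ℓ, ∀ k < Rtot ℓ, ∀ k' < Rtot ℓ,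
      ∑ c : (Σ s : Fin (S + 1), Fin (r s ℓ)), v ℓ k c * v ℓ k' c = if k = k' then 1 else 0)
    (hsvd : ∀ ℓ s m i, u s ℓ m i =
      ∑ t ∈ Finset.range (Rtot ℓ), σ ℓ t * z ℓ t i * v ℓ t ⟨s, m⟩)
    (hrr : ∀ ℓ, rr ℓ ≤ Rtot ℓ)
    (P : Fin 3 → Fin n → Fin n → ℝ)
    (hP : ∀ ℓ i i', P ℓ i i' = ∑ t ∈ Finset.range (rr ℓ), z ℓ t i * z ℓ t i')
    (U0 : Fin n → Fin n → Fin n → ℝ)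
    (hU0 : ∀ i j k, U0 i j k =
      ∑ i', ∑ j', ∑ k', P 0 i i' * P 1 j j' * P 2 k k' * Uhat i' j' k')
    (C : ℝ) (hC : 0 < C)
    (hstab : ∑ s, ∑ m1, ∑ m2, ∑ m3, (B s m1 m2 m3) ^ 2 ≤
      C * ∑ i, ∑ j, ∑ k, (Uhat i j k) ^ 2) :
    Real.sqrt (∑ i, ∑ j, ∑ k, (Uhat i j k - U0 i j k) ^ 2) ≤
      Real.sqrt C * Real.sqrt (∑ i, ∑ j, ∑ k, (Uhat i j k) ^ 2) *
        ∑ ℓ : Fin 3, Real.sqrt (∑ k ∈ Finset.Ico (rr ℓ) (Rtot ℓ), (σ ℓ k) ^ 2) :=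
  tucker_sum_to_tucker_relative_error_bound_general n S r rr u B hu U hU Uhat hUhat Rtot σ z v hz hv
    hsvd hrr P hP U0 hU0 C hstab
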